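/- Fix an integer ℓ ≥ 0. Let G be a finite simple graph, S ⊆ V(G) with |S| ≥ 2, f : S → ℕ with f(s) ≥ 1 for all s ∈ S, and A ⊆ S with |A| = 2 such that every vertex of A is adjacent in G to two leaves (degree-1 vertices) of G, neither of which lies in S. Let G' be obtained by affixing the spoon gadget Sp(ℓ,2) to G at A, and let v denote the path head of the gadget. Then, for the fragile power domination process on G' with multiset placement M(S,f), Pr_q(v is observed) = 1 − q^{f(A)}, where f(A) = Σ_{w∈A} f(w); moreover for every vertex v' of the appended path on ℓ vertices, Pr_q(v' is observed) = Pr_q(v is observed). -/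

import Mathlib

/-!
The head and the appended path are observed exactly when the placement contains a vertex of
`A`. A sensor on a vertex of `A` observes both other cycle vertices `conn` and `opp`; then `opp`
forces the second vertex of `A`, `conn` forces the head, and the head forces the path one vertex
at a time. Without a sensor on `A`, the vertex set of `G` is already closed under forcing, because
each vertex of `A` has the two unobserved neighbors `conn` and `opp`. So `Pr_q(v)` is the
probability that some sensor on `A` works, which is `1 - q ^ f(A)` after expanding
`1 = ∏_{s ∈ S} ((1 - q ^ f(s)) + q ^ f(s))` over the subsets of `S`.
-/

open Polynomial

/-- The closed neighborhood `N[S]` of a set of vertices. -/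
def closedNbhd {V : Type*} (G : SimpleGraph V) (S : Set V) : Set V :=
  ⋃ v ∈ S, insert v (G.neighborSet v)

/-- A set `B` is closed under the zero forcing step: whenever `x ∈ B` has exactly one
neighbor `y` outside `B`, then `y` is already in `B`. -/
def PDClosed {V : Type*} (G : SimpleGraph V) (B : Set V) : Prop :=
  ∀ x ∈ B, ∀ y : V, G.neighborSet x \ B = {y} → y ∈ B

/-- `Obs G S` is the set of observed vertices of the power domination process started with
PMU placement `S`: the least superset of `N[S]` closed under the zero forcing step. -/
def Obs {V : Type*} (G : SimpleGraph V) (S : Set V) : Set V :=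
  ⋂₀ {B : Set V | closedNbhd G S ⊆ B ∧ PDClosed G B}

/-- The probability (as a polynomial in the failure probability `q`) that the vertex `u`
is observed under the multiset placement `M(S,f)`:
`Pr_q(u) = Σ_{T ⊆ S, u ∈ Obs(G;T)} q^{f(S∖T)} Π_{s∈T}(1 − q^{f(s)})`.
(For `T ⊆ S` we have `f(S∖T) = f(S) − f(T)`.) -/
noncomputable def prObs {V : Type*} (G : SimpleGraph V) (S : Finset V) (f : V → ℕ)
    (u : V) : Polynomial ℝ :=
  ∑ T ∈ S.powerset,
    Set.indicator (Obs G ↑T)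
      (fun _ => X ^ ((∑ v ∈ S, f v) - ∑ v ∈ T, f v) * ∏ v ∈ T, (1 - X ^ f v)) u

/-- The vertices of the graph obtained by affixing the spoon gadget `Sp(ℓ,2)` to a graph on
`V`: the original vertices, the degree-3 cycle vertex `conn` (which carries the leaf), the
cycle vertex `opp` opposite to it, the path head (the added leaf), and the `ℓ` vertices of
the appended path. -/
inductive Spoon2Vert (V : Type) (ℓ : ℕ) : Type
  | orig : V → Spoon2Vert V ℓ
  | conn : Spoon2Vert V ℓ
  | opp : Spoon2Vert V ℓ
  | head : Spoon2Vert V ℓ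
  | path : Fin ℓ → Spoon2Vert V ℓ

/-- The adjacency generating relation of the `Sp(ℓ,2)`-extension: original edges of `G`;
the 4-cycle `e 0 – conn – e 1 – opp – e 0`; the leaf `head` at `conn`; and the appended
path on `ℓ` vertices attached at `head`. -/
def spoon2Rel {V : Type} (G : SimpleGraph V) (ℓ : ℕ) (e : Fin 2 → V) :
    Spoon2Vert V ℓ → Spoon2Vert V ℓ → Prop
  | Spoon2Vert.orig u, Spoon2Vert.orig v => G.Adj u v
  | Spoon2Vert.orig u, Spoon2Vert.conn => u = e 0 ∨ u = e 1
  | Spoon2Vert.orig u, Spoon2Vert.opp => u = e 0 ∨ u = e 1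
  | Spoon2Vert.conn, Spoon2Vert.head => True
  | Spoon2Vert.head, Spoon2Vert.path j => (j : ℕ) = 0
  | Spoon2Vert.path j, Spoon2Vert.path j' => (j' : ℕ) = (j : ℕ) + 1
  | _, _ => False

/-- The graph obtained from `G` by affixing the spoon gadget `Sp(ℓ,2)` at `e 0, e 1`. -/
def spoon2Graph {V : Type} (G : SimpleGraph V) (ℓ : ℕ) (e : Fin 2 → V) :
    SimpleGraph (Spoon2Vert V ℓ) :=
  SimpleGraph.fromRel (spoon2Rel G ℓ e)

/-- Embedding of the original vertex set into the extended one. -/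
def origEmb (V : Type) (ℓ : ℕ) : V ↪ Spoon2Vert V ℓ :=
  ⟨Spoon2Vert.orig, fun x y h => by injection h⟩

/-- Extension of a sensor multiplicity function to the extended vertex set (no sensors are
placed on gadget vertices, so the values there are irrelevant). -/
def liftF {V : Type} (ℓ : ℕ) (f : V → ℕ) : Spoon2Vert V ℓ → ℕ
  | Spoon2Vert.orig v => f v
  | _ => 1

open Finset Spoon2Vert

section Weights

variable {R : Type*} [CommRing R] (q : R) {α : Type*}

theorem sum_powerset_pow_mul_prod_one_sub_pow (s : Finset α) (g : α → ℕ) :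
    ∑ T ∈ s.powerset, q ^ (∑ v ∈ s, g v - ∑ v ∈ T, g v) * ∏ v ∈ T, (1 - q ^ g v) =
      1 := by
  classical
  calc _ = ∑ T ∈ s.powerset, (∏ v ∈ T, (1 - q ^ g v)) * ∏ v ∈ s \ T, q ^ g v := by
        refine sum_congr rfl fun T hT => ?_
        have h := sum_sdiff (f := g) (mem_powerset.1 hT)
        rw [prod_pow_eq_pow_sum, mul_comm,
          show ∑ v ∈ s \ T, g v = ∑ v ∈ s, g v - ∑ v ∈ T, g v by omega]
    _ = ∏ v ∈ s, ((1 - q ^ g v) + q ^ g v) := (prod_add _ _ s).symm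
    _ = 1 := by simp

variable [DecidableEq α]

theorem sum_powerset_filter_not_exists_pow_mul_prod {S A : Finset α} (hAS : A ⊆ S)
    (g : α → ℕ) :
    ∑ T ∈ S.powerset with ¬∃ a ∈ A, a ∈ T,
        q ^ (∑ v ∈ S, g v - ∑ v ∈ T, g v) * ∏ v ∈ T, (1 - q ^ g v) =
      q ^ ∑ a ∈ A, g a := by
  have hfilter : {T ∈ S.powerset | ¬∃ a ∈ A, a ∈ T} = (S \ A).powerset := by
    ext T
    simp only [mem_filter, mem_powerset, subset_sdiff, disjoint_left, not_exists, not_and]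
    exact ⟨fun ⟨hTS, h⟩ => ⟨hTS, fun a haT haA => h a haA haT⟩,
      fun ⟨hTS, h⟩ => ⟨hTS, fun a haA haT => h haT haA⟩⟩
  have hsplit := sum_sdiff (f := g) hAS
  rw [hfilter]
  calc _ = ∑ T ∈ (S \ A).powerset, q ^ (∑ a ∈ A, g a) *
          (q ^ (∑ v ∈ S \ A, g v - ∑ v ∈ T, g v) * ∏ v ∈ T, (1 - q ^ g v)) := by
        refine sum_congr rfl fun T hT => ?_
        have hTle := sum_le_sum_of_subset (f := g) (mem_powerset.1 hT)
        rw [← mul_assoc, ← pow_add]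
        congr 2
        omega
    _ = q ^ ∑ a ∈ A, g a := by
        rw [← mul_sum, sum_powerset_pow_mul_prod_one_sub_pow, mul_one]

theorem sum_powerset_filter_exists_pow_mul_prod {S A : Finset α} (hAS : A ⊆ S) (g : α → ℕ) :
    ∑ T ∈ S.powerset with ∃ a ∈ A, a ∈ T,
        q ^ (∑ v ∈ S, g v - ∑ v ∈ T, g v) * ∏ v ∈ T, (1 - q ^ g v) =
      1 - q ^ ∑ a ∈ A, g a := by
  rw [eq_sub_iff_add_eq, ← sum_powerset_filter_not_exists_pow_mul_prod q hAS g,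
    sum_filter_add_sum_filter_not, sum_powerset_pow_mul_prod_one_sub_pow]

end Weights

section PowerDomination

variable {W : Type*} (G : SimpleGraph W)

theorem subset_closedNbhd (S : Set W) : S ⊆ closedNbhd G S :=
  fun v hv => Set.mem_biUnion hv (Set.mem_insert v _)

theorem neighborSet_subset_closedNbhd {S : Set W} {v : W} (hv : v ∈ S) :
    G.neighborSet v ⊆ closedNbhd G S :=
  fun _ hw => Set.mem_biUnion hv (Set.mem_insert_of_mem v hw)

theorem closedNbhd_subset_obs (S : Set W) : closedNbhd G S ⊆ Obs G S :=
  Set.subset_sInter fun _ hB => hB.1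

theorem obs_subset {S B : Set W} (hS : closedNbhd G S ⊆ B) (hB : PDClosed G B) :
    Obs G S ⊆ B :=
  Set.sInter_subset_of_mem ⟨hS, hB⟩

theorem pdClosed_obs (S : Set W) : PDClosed G (Obs G S) := by
  intro x hx y hy
  have hyN : y ∈ G.neighborSet x \ Obs G S := hy ▸ rfl
  refine Set.mem_sInter.2 fun B ⟨hSB, hB⟩ => ?_
  have hObsB : Obs G S ⊆ B := obs_subset G hSB hB
  by_contra hyB
  refine hyB (hB x (hObsB hx) y (Set.Subset.antisymm (fun z hz => ?_) ?_))
  · exact hy ▸ ⟨hz.1, fun hzO => hz.2 (hObsB hzO)⟩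
  · rintro z rfl
    exact ⟨hyN.1, hyB⟩

variable {G}

theorem PDClosed.mem_of_neighborSet_subset {B : Set W} (hB : PDClosed G B) {x y : W}
    (hx : x ∈ B) (hxy : G.Adj x y) (hN : G.neighborSet x ⊆ insert y B) : y ∈ B := by
  by_contra hyB
  refine hyB (hB x hx y (Set.Subset.antisymm (fun z hz => ?_) ?_))
  · exact (hN hz.1).resolve_right hz.2
  · rintro z rfl
    exact ⟨hxy, hyB⟩

variable (G)

theorem prObs_eq_one_sub_pow_of_mem_obs_iff {S A : Finset W} (hAS : A ⊆ S) (f : W → ℕ)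
    {u : W} (hu : ∀ T ⊆ S, u ∈ Obs G ↑T ↔ ∃ a ∈ A, a ∈ T) :
    prObs G S f u = 1 - X ^ ∑ a ∈ A, f a := by
  classical
  rw [prObs, ← sum_powerset_filter_exists_pow_mul_prod X hAS f, sum_filter]
  refine sum_congr rfl fun T hT => ?_
  simp only [Set.indicator_apply, hu T (mem_powerset.1 hT)]

end PowerDomination

section Spoon

@[simp]
theorem origEmb_apply {V : Type} {ℓ : ℕ} (v : V) : origEmb V ℓ v = orig v :=
  rfl

variable {V : Type} {ℓ : ℕ} (G : SimpleGraph V) (e : Fin 2 → V)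

theorem spoon2Graph_neighborSet_opp :
    (spoon2Graph G ℓ e).neighborSet opp = {orig (e 0), orig (e 1)} := by
  ext y
  cases y <;> simp [spoon2Graph, spoon2Rel]

theorem spoon2Graph_neighborSet_conn :
    (spoon2Graph G ℓ e).neighborSet conn = {orig (e 0), orig (e 1), head} := by
  ext y
  cases y <;> simp [spoon2Graph, spoon2Rel]

theorem spoon2Graph_adj_head {y : Spoon2Vert V ℓ} :
    (spoon2Graph G ℓ e).Adj head y ↔
      y = conn ∨ ∃ j : Fin ℓ, (j : ℕ) = 0 ∧ y = path j := by
  cases y <;> simp [spoon2Graph, spoon2Rel]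

theorem spoon2Graph_adj_path {j : Fin ℓ} {y : Spoon2Vert V ℓ} :
    (spoon2Graph G ℓ e).Adj (path j) y ↔
      ((j : ℕ) = 0 ∧ y = head) ∨
        ∃ j' : Fin ℓ, ((j : ℕ) = j' + 1 ∨ (j' : ℕ) = j + 1) ∧ y = path j' := by
  cases y <;> simp [spoon2Graph, spoon2Rel]
  rw [← Fin.val_inj]
  omega

theorem spoon2Graph_adj_orig {u : V} {y : Spoon2Vert V ℓ} :
    (spoon2Graph G ℓ e).Adj (orig u) y ↔
      (∃ w, G.Adj u w ∧ y = orig w) ∨ ((u = e 0 ∨ u = e 1) ∧ (y = conn ∨ y = opp)) := by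
  cases y <;> simp [spoon2Graph, spoon2Rel, SimpleGraph.adj_comm]
  exact G.ne_of_adj

theorem spoon2Graph_adj_orig_conn (i : Fin 2) : (spoon2Graph G ℓ e).Adj (orig (e i)) conn := by
  fin_cases i <;> simp [spoon2Graph, spoon2Rel]

theorem spoon2Graph_adj_orig_opp (i : Fin 2) : (spoon2Graph G ℓ e).Adj (orig (e i)) opp := by
  fin_cases i <;> simp [spoon2Graph, spoon2Rel]

variable {G e}

theorem conn_mem_obs {T : Set (Spoon2Vert V ℓ)} (hT : ∃ i, orig (e i) ∈ T) :
    conn ∈ Obs (spoon2Graph G ℓ e) T := by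
  obtain ⟨i, hi⟩ := hT
  exact closedNbhd_subset_obs _ T
    (neighborSet_subset_closedNbhd _ hi (spoon2Graph_adj_orig_conn G e i))

theorem head_mem_obs {T : Set (Spoon2Vert V ℓ)} (hT : ∃ i, orig (e i) ∈ T) :
    head ∈ Obs (spoon2Graph G ℓ e) T := by
  obtain ⟨i, hi⟩ := hT
  set H := spoon2Graph G ℓ e
  have hB := pdClosed_obs H T
  have hopp : opp ∈ Obs H T := closedNbhd_subset_obs H T
    (neighborSet_subset_closedNbhd H hi (spoon2Graph_adj_orig_opp G e i))
  have horig : ∀ k, orig (e k) ∈ Obs H T := by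
    have hi' := closedNbhd_subset_obs H T (subset_closedNbhd H T hi)
    intro k
    by_cases hk : k = i
    · exact hk ▸ hi'
    · refine hB.mem_of_neighborSet_subset hopp (spoon2Graph_adj_orig_opp G e k).symm ?_
      rw [spoon2Graph_neighborSet_opp]
      fin_cases k <;> fin_cases i <;> simp_all [Set.insert_subset_iff]
  refine hB.mem_of_neighborSet_subset (conn_mem_obs ⟨i, hi⟩)
    (by simp [H, spoon2Graph, spoon2Rel]) ?_
  simp [H, spoon2Graph_neighborSet_conn, Set.insert_subset_iff, horig]

theorem path_mem_obs {T : Set (Spoon2Vert V ℓ)} (hT : ∃ i, orig (e i) ∈ T) (j : Fin ℓ) :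
    path j ∈ Obs (spoon2Graph G ℓ e) T := by
  have hB := pdClosed_obs (spoon2Graph G ℓ e) T
  obtain ⟨n, hn⟩ := j
  induction n using Nat.strong_induction_on with
  | _ n ih =>
    rcases n with _ | m
    · refine hB.mem_of_neighborSet_subset (head_mem_obs hT) ((spoon2Graph_adj_head G e).2
        (Or.inr ⟨_, rfl, rfl⟩)) fun z hz => ?_
      rcases (spoon2Graph_adj_head G e).1 hz with rfl | ⟨j', hj', rfl⟩
      · exact Or.inr (conn_mem_obs hT)
      · exact Or.inl (congrArg path (Fin.ext hj'))
    · refine hB.mem_of_neighborSet_subset (ih m (by omega) (by omega))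
        ((spoon2Graph_adj_path G e).2 (Or.inr ⟨_, Or.inr rfl, rfl⟩)) fun z hz => ?_
      rcases (spoon2Graph_adj_path G e).1 hz with ⟨-, rfl⟩ | ⟨j', hj' | hj', rfl⟩
      · exact Or.inr (head_mem_obs hT)
      · exact Or.inr (ih j' (by simp at hj'; omega) j'.2)
      · exact Or.inl (congrArg path (Fin.ext hj'))

variable (G e)

theorem obs_subset_range_orig {T : Set (Spoon2Vert V ℓ)} (hT : T ⊆ Set.range orig)
    (hA : ∀ i, orig (e i) ∉ T) : Obs (spoon2Graph G ℓ e) T ⊆ Set.range orig := by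
  set H := spoon2Graph G ℓ e
  refine obs_subset H (fun z hz => ?_) ?_
  · obtain ⟨v, hv, hz⟩ := Set.mem_iUnion₂.1 hz
    obtain ⟨u, rfl⟩ := hT hv
    rcases hz with rfl | hadj
    · exact ⟨u, rfl⟩
    rcases (spoon2Graph_adj_orig G e).1 hadj with ⟨w, -, rfl⟩ | ⟨rfl | rfl, -⟩
    · exact ⟨w, rfl⟩
    · exact (hA 0 hv).elim
    · exact (hA 1 hv).elim
  · rintro _ ⟨u, rfl⟩ y hy
    have hyN : y ∈ H.neighborSet (orig u) \ Set.range orig := hy ▸ rfl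
    rcases (spoon2Graph_adj_orig G e).1 hyN.1 with ⟨w, -, rfl⟩ | ⟨hu, -⟩
    · exact ⟨w, rfl⟩
    have hgadget : ∀ z, H.Adj (orig u) z → z ∉ Set.range orig → z = y := fun z hz hzB =>
      Set.eq_of_mem_singleton (hy ▸ ⟨hz, hzB⟩)
    have hconn := hgadget conn ((spoon2Graph_adj_orig G e).2 (Or.inr ⟨hu, Or.inl rfl⟩))
      (by rintro ⟨_, ⟨⟩⟩)
    have hopp := hgadget opp ((spoon2Graph_adj_orig G e).2 (Or.inr ⟨hu, Or.inr rfl⟩))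
      (by rintro ⟨_, ⟨⟩⟩)
    exact absurd (hconn.trans hopp.symm) (by simp)

theorem head_mem_obs_iff {T : Set (Spoon2Vert V ℓ)} (hT : T ⊆ Set.range orig) :
    head ∈ Obs (spoon2Graph G ℓ e) T ↔ ∃ i, orig (e i) ∈ T := by
  refine ⟨fun h => ?_, head_mem_obs⟩
  by_contra! hA
  obtain ⟨_, ⟨⟩⟩ := obs_subset_range_orig G e hT hA h

theorem path_mem_obs_iff {T : Set (Spoon2Vert V ℓ)} (hT : T ⊆ Set.range orig) (j : Fin ℓ) :
    path j ∈ Obs (spoon2Graph G ℓ e) T ↔ ∃ i, orig (e i) ∈ T := by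
  refine ⟨fun h => ?_, fun h => path_mem_obs h j⟩
  by_contra! hA
  obtain ⟨_, ⟨⟩⟩ := obs_subset_range_orig G e hT hA h

end Spoon

theorem stmt13_general {V : Type} (ℓ : ℕ)
    (G : SimpleGraph V) (S : Finset V)
    (f : V → ℕ)
    (A : Finset V) (hAS : A ⊆ S)
    (e : Fin 2 ↪ V) (he : Finset.univ.map e = A) :
    prObs (spoon2Graph G ℓ ⇑e) (S.map (origEmb V ℓ)) (liftF ℓ f) Spoon2Vert.head
        = 1 - X ^ (∑ w ∈ A, f w) ∧
      ∀ j : Fin ℓ,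
        prObs (spoon2Graph G ℓ ⇑e) (S.map (origEmb V ℓ)) (liftF ℓ f) (Spoon2Vert.path j)
          = prObs (spoon2Graph G ℓ ⇑e) (S.map (origEmb V ℓ)) (liftF ℓ f)
              Spoon2Vert.head := by
  classical
  set A' := A.map (origEmb V ℓ)
  have hA'S : A' ⊆ S.map (origEmb V ℓ) := map_subset_map.2 hAS
  have hsum : ∑ a ∈ A', liftF ℓ f a = ∑ a ∈ A, f a := sum_map _ _ _
  have hrange (T : Finset (Spoon2Vert V ℓ)) (hT : T ⊆ S.map (origEmb V ℓ)) :
      (↑T : Set (Spoon2Vert V ℓ)) ⊆ Set.range orig := fun _ hv => by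
    obtain ⟨u, -, rfl⟩ := mem_map.1 (hT hv)
    exact ⟨u, rfl⟩
  have hmeets (T : Finset (Spoon2Vert V ℓ)) :
      (∃ i, orig (e i) ∈ (↑T : Set (Spoon2Vert V ℓ))) ↔ ∃ a ∈ A', a ∈ T := by
    simp [A', ← he]
  have hhead : prObs (spoon2Graph G ℓ e) (S.map (origEmb V ℓ)) (liftF ℓ f) head
      = 1 - X ^ (∑ w ∈ A, f w) := by
    rw [← hsum]
    exact prObs_eq_one_sub_pow_of_mem_obs_iff _ hA'S _ fun T hT =>
      (head_mem_obs_iff G e (hrange T hT)).trans (hmeets T)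
  refine ⟨hhead, fun j => ?_⟩
  rw [hhead, ← hsum]
  exact prObs_eq_one_sub_pow_of_mem_obs_iff _ hA'S _ fun T hT =>
    (path_mem_obs_iff G e (hrange T hT) j).trans (hmeets T)

theorem stmt13 {V : Type} [Fintype V] (ℓ : ℕ)
    (G : SimpleGraph V) (S : Finset V) (hS : 2 ≤ S.card)
    (f : V → ℕ) (hf : ∀ v ∈ S, 1 ≤ f v)
    (A : Finset V) (hAS : A ⊆ S) (hAcard : A.card = 2)
    (e : Fin 2 ↪ V) (he : Finset.univ.map e = A)
    (hleaves : ∀ v ∈ A, ∃ l₁ l₂ : V, l₁ ≠ l₂ ∧ l₁ ∉ S ∧ l₂ ∉ S ∧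
        G.neighborSet l₁ = {v} ∧ G.neighborSet l₂ = {v}) :
    prObs (spoon2Graph G ℓ ⇑e) (S.map (origEmb V ℓ)) (liftF ℓ f) Spoon2Vert.head
        = 1 - X ^ (∑ w ∈ A, f w) ∧
      ∀ j : Fin ℓ,
        prObs (spoon2Graph G ℓ ⇑e) (S.map (origEmb V ℓ)) (liftF ℓ f) (Spoon2Vert.path j)
          = prObs (spoon2Graph G ℓ ⇑e) (S.map (origEmb V ℓ)) (liftF ℓ f)
              Spoon2Vert.head :=
  stmt13_general ℓ G S f A hAS e he
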